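/- arXiv:math/0501404 — 6 statements merged into one kernel-verified Lean document; each statement's English description precedes it below -/
import Mathlib

section
/- Let P be a well-founded partially ordered set. Then the set of all finite antichains of P, ordered by refinement (X ⊑ Y iff for every x ∈ X there exists y ∈ Y with x ≤ y), is well-founded. -/
/-- `X` refines `Y`: every element of `X` lies below some element of `Y`. -/
def FinsetRefines {P : Type*} [PartialOrder P] (X Y : Finset P) : Prop :=
  ∀ x ∈ X, ∃ y ∈ Y, x ≤ y

/-! Strict refinement of antichains is contained in the Dershowitz–Manna multiset order, which is
well-founded over a well-founded order: with `A = (A ∩ B) + (A \ B)` and `B = (A ∩ B) + (B \ A)`,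
every `a ∈ A \ B` lies below some `b ∈ B`, and such a `b` is strictly above `a` and, `A` being an
antichain, outside `A`. -/

namespace Finset

lemma val_eq_inter_add_sdiff {α : Type*} [DecidableEq α] (A B : Finset α) :
    A.val = (A ∩ B).val + (A \ B).val := by
  rw [inter_val, sdiff_val, add_comm, Multiset.sub_add_inter]

variable {P : Type*} [PartialOrder P] [DecidableEq P]

lemma sdiff_nonempty_of_not_finsetRefines {A B : Finset P} (h : ¬ FinsetRefines B A) :
    (B \ A).Nonempty := by
  simp only [FinsetRefines, not_forall, not_exists, not_and] at h
  obtain ⟨b, hb, hbA⟩ := h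
  exact ⟨b, mem_sdiff.2 ⟨hb, fun hb' => hbA b hb' le_rfl⟩⟩

lemma exists_lt_mem_sdiff_of_finsetRefines {A B : Finset P}
    (hA : IsAntichain (· ≤ ·) (A : Set P)) (hAB : FinsetRefines A B) {a : P} (ha : a ∈ A \ B) :
    ∃ b ∈ B \ A, a < b := by
  obtain ⟨haA, haB⟩ := mem_sdiff.1 ha
  obtain ⟨b, hb, hab⟩ := hAB a haA
  have hne : a ≠ b := fun h => haB (h ▸ hb)
  exact ⟨b, mem_sdiff.2 ⟨hb, fun hbA => hA haA hbA hne hab⟩, hab.lt_of_ne hne⟩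

lemma isDershowitzMannaLT_val_of_finsetRefines {A B : Finset P}
    (hA : IsAntichain (· ≤ ·) (A : Set P)) (hAB : FinsetRefines A B) (hBA : ¬ FinsetRefines B A) :
    Multiset.IsDershowitzMannaLT A.val B.val := by
  refine ⟨(A ∩ B).val, (A \ B).val, (B \ A).val, ?_, A.val_eq_inter_add_sdiff B, ?_, ?_⟩
  · exact val_eq_zero.not.2 (sdiff_nonempty_of_not_finsetRefines hBA).ne_empty
  · rw [inter_comm]; exact B.val_eq_inter_add_sdiff A
  · exact fun a ha => exists_lt_mem_sdiff_of_finsetRefines hA hAB ha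

end Finset

/-- The set of all finite antichains of `P`, ordered by refinement, is well-founded
whenever `P` is a well-founded partially ordered set. -/
theorem finite_antichains_wellFounded {P : Type*} [PartialOrder P]
    (hwf : WellFoundedLT P) :
    WellFounded (fun X Y : {X : Finset P // IsAntichain (· ≤ ·) (X : Set P)} =>
      FinsetRefines X.1 Y.1 ∧ ¬ FinsetRefines Y.1 X.1) := by
  classical
  exact Subrelation.wf
    (fun {A _} h => Finset.isDershowitzMannaLT_val_of_finsetRefines A.2 h.1 h.2)
    (InvImage.wf (Finset.val ∘ Subtype.val) Multiset.wellFounded_isDershowitzMannaLT)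
end

section
/- Every well-founded lattice has the weak minimal join-cover refinement property: for every element a (nonzero if the lattice has a least element), every nontrivial join-cover of a can be refined to a minimal nontrivial join-cover of a. -/
section
variable {L : Type*} [Lattice L]

/-- `X` is a join-cover of `a`: a nonempty finite set of non-least elements whose join
is above `a`. -/
def IsJoinCover (a : L) (X : Finset L) : Prop :=
  (∀ x ∈ X, ¬ IsBot x) ∧ ∃ h : X.Nonempty, a ≤ X.sup' h id

/-- A join-cover is nontrivial if `a` lies below no member of it. -/
def IsNontrivialJoinCover (a : L) (X : Finset L) : Prop :=
  IsJoinCover a X ∧ ∀ x ∈ X, ¬ a ≤ x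

/-- `X` refines `Y`. -/
def Refines (X Y : Finset L) : Prop := ∀ x ∈ X, ∃ y ∈ Y, x ≤ y

/-- `X` is a minimal nontrivial join-cover of `a`: every nontrivial join-cover of `a`
refining `X` contains `X`. -/
def IsMinimalNontrivialJoinCover (a : L) (X : Finset L) : Prop :=
  IsNontrivialJoinCover a X ∧
    ∀ Y : Finset L, IsNontrivialJoinCover a Y → Refines Y X → X ⊆ Y

end

/-!
Order finite sets by the Dershowitz–Manna order on their underlying multisets; over a
well-founded lattice it is well-founded, so some nontrivial join-cover refining `X` is minimal
for it. That cover is a minimal nontrivial join-cover: otherwise some nontrivial join-cover `W`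
refining it misses one of its elements, and the maximal elements of `W` form a nontrivial
join-cover refining it that is smaller in the multiset order, because, being an antichain, each
of its new elements lies strictly below an old element it omits.
-/

open Multiset

section
variable {L : Type*} [Lattice L]

theorem Refines.refl (X : Finset L) : Refines X X :=
  fun x hx => ⟨x, hx, le_rfl⟩

theorem Refines.trans {X Y Z : Finset L} (hXY : Refines X Y) (hYZ : Refines Y Z) :
    Refines X Z := by
  intro x hx
  obtain ⟨y, hy, hxy⟩ := hXY x hx
  obtain ⟨z, hz, hyz⟩ := hYZ y hy
  exact ⟨z, hz, hxy.trans hyz⟩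

theorem refines_of_subset {X Y : Finset L} (h : X ⊆ Y) : Refines X Y :=
  fun x hx => ⟨x, h hx, le_rfl⟩

theorem exists_isAntichain_subset_refines (W : Finset L) :
    ∃ Z ⊆ W, IsAntichain (· ≤ ·) (Z : Set L) ∧ Refines W Z := by
  classical
  refine ⟨W.filter (Maximal (· ∈ W)), Finset.filter_subset _ _,
    (setOfPred_maximal_antichain _).subset fun z hz => (Finset.mem_filter.1 hz).2, ?_⟩
  intro w hw
  obtain ⟨z, hwz, hz⟩ := W.exists_le_maximal hw
  exact ⟨z, Finset.mem_filter.2 ⟨hz.prop, hz⟩, hwz⟩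

theorem IsNontrivialJoinCover.of_subset_of_refines {a : L} {W Z : Finset L}
    (hW : IsNontrivialJoinCover a W) (hZW : Z ⊆ W) (hWZ : Refines W Z) :
    IsNontrivialJoinCover a Z := by
  obtain ⟨⟨hWbot, hWne, haW⟩, hWa⟩ := hW
  obtain ⟨w, hw⟩ := hWne
  obtain ⟨z, hz, -⟩ := hWZ w hw
  refine ⟨⟨fun x hx => hWbot x (hZW hx), ⟨z, hz⟩, haW.trans ?_⟩, fun x hx => hWa x (hZW hx)⟩
  refine Finset.sup'_le _ _ fun w hw => ?_
  obtain ⟨z, hz, hwz⟩ := hWZ w hw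
  exact hwz.trans (Finset.le_sup' id hz)

theorem isDershowitzMannaLT_val_of_refines {Y Z : Finset L} (hZY : Refines Z Y)
    (hZ : IsAntichain (· ≤ ·) (Z : Set L)) (hYZ : ¬ Y ⊆ Z) :
    IsDershowitzMannaLT Z.val Y.val := by
  classical
  refine ⟨(Z ∩ Y).val, (Z \ Y).val, (Y \ Z).val, ?_, ?_, ?_, ?_⟩
  · exact fun h => hYZ (Finset.sdiff_eq_empty_iff_subset.1 (Finset.val_eq_zero.1 h))
  · rw [Finset.inter_val, Finset.sdiff_val, add_comm, sub_add_inter]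
  · rw [Finset.inter_val, inter_comm, Finset.sdiff_val, add_comm, sub_add_inter]
  · intro x hx
    obtain ⟨hxZ, hxY⟩ := Finset.mem_sdiff.1 hx
    obtain ⟨y, hy, hxy⟩ := hZY x hxZ
    have hne : x ≠ y := by rintro rfl; exact hxY hy
    exact ⟨y, Finset.mem_sdiff.2 ⟨hy, fun hyZ => hne (hZ.eq hxZ hyZ hxy)⟩, hxy.lt_of_ne hne⟩

theorem IsNontrivialJoinCover.exists_isDershowitzMannaLT_of_not_minimal {a : L} {Y : Finset L}
    (hYc : IsNontrivialJoinCover a Y) (hY : ¬ IsMinimalNontrivialJoinCover a Y) :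
    ∃ Z, IsNontrivialJoinCover a Z ∧ Refines Z Y ∧ IsDershowitzMannaLT Z.val Y.val := by
  obtain ⟨W, hW, hWY, hYW⟩ : ∃ W, IsNontrivialJoinCover a W ∧ Refines W Y ∧ ¬ Y ⊆ W := by
    simpa [IsMinimalNontrivialJoinCover, hYc] using hY
  obtain ⟨Z, hZW, hZ, hWZ⟩ := exists_isAntichain_subset_refines W
  have hZY : Refines Z Y := (refines_of_subset hZW).trans hWY
  exact ⟨Z, hW.of_subset_of_refines hZW hWZ, hZY,
    isDershowitzMannaLT_val_of_refines hZY hZ fun hYZ => hYW (hYZ.trans hZW)⟩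

end

theorem wellFounded_implies_weak_minimal_joinCover_refinement_general
    {L : Type*} [Lattice L] (hwf : WellFoundedLT L)
    (a : L) (X : Finset L) (hX : IsNontrivialJoinCover a X) :
    ∃ Y : Finset L, IsMinimalNontrivialJoinCover a Y ∧ Refines Y X := by
  have hdm : WellFounded fun Y Z : Finset L => IsDershowitzMannaLT Y.val Z.val :=
    InvImage.wf _ wellFounded_isDershowitzMannaLT
  obtain ⟨Y, ⟨hY, hYX⟩, hYmin⟩ :=
    hdm.has_min {Y | IsNontrivialJoinCover a Y ∧ Refines Y X} ⟨X, hX, Refines.refl X⟩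
  refine ⟨Y, ?_, hYX⟩
  by_contra hnot
  obtain ⟨Z, hZ, hZY, hZlt⟩ := hY.exists_isDershowitzMannaLT_of_not_minimal hnot
  exact hYmin Z ⟨hZ, hZY.trans hYX⟩ hZlt

/-- Every well-founded lattice has the weak minimal join-cover refinement property. -/
theorem wellFounded_implies_weak_minimal_joinCover_refinement
    {L : Type*} [Lattice L] (hwf : WellFoundedLT L)
    (a : L) (ha : ¬ IsBot a) (X : Finset L) (hX : IsNontrivialJoinCover a X) :
    ∃ Y : Finset L, IsMinimalNontrivialJoinCover a Y ∧ Refines Y X :=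
  wellFounded_implies_weak_minimal_joinCover_refinement_general hwf a X hX
end

section
/- Every minimal nontrivial join-cover of an element of a lattice consists of join-irreducible elements. -/
/-- Every minimal nontrivial join-cover of an element of a lattice consists of
join-irreducible elements. -/
theorem minimal_joinCover_subset_supIrred {L : Type*} [Lattice L]
    (a : L) (X : Finset L) (hX : IsMinimalNontrivialJoinCover a X) :
    ∀ x ∈ X, SupIrred x := by
  classical
  rintro x hx
  obtain ⟨⟨⟨hbot, hne, hsup⟩, hnt⟩, hmin⟩ := hX
  constructor
  · intro hmin'
    exact hbot x hx (fun b => le_trans (hmin' (inf_le_left (b := b))) inf_le_right)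
  · intro b c hbc
    by_contra hcon
    push_neg at hcon
    obtain ⟨hb, hc⟩ := hcon
    have hbx : b ≤ x := hbc ▸ le_sup_left
    have hcx : c ≤ x := hbc ▸ le_sup_right
    have hbbot : ¬ IsBot b := fun h => hc (by rw [← hbc, sup_eq_right.mpr (h c)])
    have hcbot : ¬ IsBot c := fun h => hb (by rw [← hbc, sup_eq_left.mpr (h b)])
    set Y : Finset L := insert b (insert c (X.erase x)) with hY
    have hbY : b ∈ Y := Finset.mem_insert_self _ _
    have hcY : c ∈ Y := Finset.mem_insert_of_mem (Finset.mem_insert_self _ _)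
    have hYne : Y.Nonempty := ⟨b, hbY⟩
    have hmemY : ∀ y ∈ Y, y = b ∨ y = c ∨ y ∈ X.erase x := by
      intro y hy
      simpa [hY, Finset.mem_insert] using hy
    have hasup : a ≤ Y.sup' hYne id := by
      refine le_trans hsup (Finset.sup'_le _ _ ?_)
      intro z hz
      by_cases hzx : z = x
      · subst hzx
        calc z = b ⊔ c := hbc.symm
        _ ≤ Y.sup' hYne id := sup_le (Finset.le_sup' id hbY) (Finset.le_sup' id hcY)
      · exact Finset.le_sup' id (by
          apply Finset.mem_insert_of_mem
          apply Finset.mem_insert_of_mem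
          exact Finset.mem_erase.mpr ⟨hzx, hz⟩)
    have hYcov : IsNontrivialJoinCover a Y := by
      refine ⟨⟨?_, hYne, hasup⟩, ?_⟩
      · intro y hy
        rcases hmemY y hy with rfl | rfl | hy'
        · exact hbbot
        · exact hcbot
        · exact hbot y (Finset.mem_of_mem_erase hy')
      · intro y hy
        rcases hmemY y hy with rfl | rfl | hy'
        · exact fun h => hnt x hx (h.trans hbx)
        · exact fun h => hnt x hx (h.trans hcx)
        · exact hnt y (Finset.mem_of_mem_erase hy')
    have href : Refines Y X := by
      intro y hy
      rcases hmemY y hy with rfl | rfl | hy'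
      · exact ⟨x, hx, hbx⟩
      · exact ⟨x, hx, hcx⟩
      · exact ⟨y, Finset.mem_of_mem_erase hy', le_rfl⟩
    have hxY : x ∈ Y := hmin Y hYcov href hx
    rcases hmemY x hxY with h | h | h
    · exact hb h.symm
    · exact hc h.symm
    · exact (Finset.mem_erase.mp h).1 rfl
end

section
/- Let L be a lattice, and let p, q be distinct completely join-irreducible elements of L. Then p D q (p is join-dependent on q) if and only if p D⁰ q or p D¹ q, where: p D⁰ q iff there exists x ∈ L with p ≰ x, p_* ∨ q_* ≤ x, and p ∨ x = q ∨ x; and p D¹ q iff there exists x ∈ L with p ≰ x, q_* ≤ x, p ≤ q ∨ x, and either p ∨ x = p_* ∨ x or q ≰ p ∨ x. -/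
section
variable {L : Type*} [Lattice L]

/-- `p` is completely join-irreducible with unique lower cover `pstar`. -/
def IsCJI (p pstar : L) : Prop :=
  pstar < p ∧ ∀ x < p, x ≤ pstar

/-- The join-dependency relation. -/
def JoinDep (p q : L) : Prop :=
  p ≠ q ∧ ∃ x : L, p ≤ q ⊔ x ∧ ∀ y < q, ¬ p ≤ y ⊔ x

end

/-- For distinct completely join-irreducible `p`, `q`, one has `p D q` iff
`p D⁰ q` or `p D¹ q`. -/
theorem joinDep_iff_D0_or_D1 {L : Type*} [Lattice L]
    (p pstar q qstar : L) (hp : IsCJI p pstar) (hq : IsCJI q qstar) (hpq : p ≠ q) :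
    JoinDep p q ↔
      ((∃ x : L, ¬ p ≤ x ∧ pstar ⊔ qstar ≤ x ∧ p ⊔ x = q ⊔ x) ∨
       (∃ x : L, ¬ p ≤ x ∧ qstar ≤ x ∧ p ≤ q ⊔ x ∧
          (p ⊔ x = pstar ⊔ x ∨ ¬ q ≤ p ⊔ x))) := by
  constructor
  · rintro ⟨-, x, hpx, hy⟩
    set x' := qstar ⊔ x with hx'
    have hqx : ¬ p ≤ x' := hy qstar hq.1
    have hqsx' : qstar ≤ x' := le_sup_left
    have hpqx' : p ≤ q ⊔ x' := hpx.trans (sup_le le_sup_left (le_sup_of_le_right le_sup_right))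
    by_cases hqpx : q ≤ p ⊔ x'
    · by_cases hpp : p ≤ pstar ⊔ x'
      · right
        exact ⟨x', hqx, hqsx', hpqx',
          Or.inl (le_antisymm (sup_le hpp le_sup_right)
            (sup_le (le_sup_of_le_left hp.1.le) le_sup_right))⟩
      · left
        refine ⟨pstar ⊔ x', hpp, sup_le le_sup_left (le_sup_of_le_right hqsx'), ?_⟩
        apply le_antisymm
        · exact sup_le (hpqx'.trans (sup_le le_sup_left (le_sup_of_le_right le_sup_right)))
            le_sup_right
        · exact sup_le (hqpx.trans (sup_le le_sup_left (le_sup_of_le_right le_sup_right)))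
            le_sup_right
    · right
      exact ⟨x', hqx, hqsx', hpqx', Or.inr hqpx⟩
  · rintro (⟨x, hpx, hle, heq⟩ | ⟨x, hpx, hqs, hpq', -⟩)
    · refine ⟨hpq, x, le_sup_left.trans_eq heq, fun y hy hc => ?_⟩
      have hyq : y ≤ qstar := hq.2 y hy
      exact hpx (hc.trans (sup_le (hyq.trans (le_sup_right.trans hle)) le_rfl))
    · refine ⟨hpq, x, hpq', fun y hy hc => ?_⟩
      have hyq : y ≤ qstar := hq.2 y hy
      exact hpx (hc.trans (sup_le (hyq.trans hqs) le_rfl))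
end

section
/- Let L be a lattice, and let G₊, G₋ be subsets of L such that every element of L is a finite join of elements of G₊ and a finite meet of elements of G₋. Assume that for all a ∈ G₋ and b, c ∈ G₊, a ∨ b = a ∨ c implies a ∨ b = a ∨ (b ∧ c). Then for all a ∈ L and b, c ∈ G₊, a ∨ b = a ∨ c implies a ∨ b = a ∨ (b ∧ c). -/
/-- If every element of `L` is a finite join of elements of `G₊` and a finite meet of
elements of `G₋`, and the join-semidistributive implication holds with the first variable
in `G₋` and the other two in `G₊`, then it holds with the first variable arbitrary in `L`
and the other two in `G₊` (and hence, by a standard fact, `L` is join-semidistributive). -/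
theorem jsd_from_generators {L : Type*} [Lattice L] (Gp Gm : Set L)
    (hGp : ∀ x : L, ∃ F : Finset L, ↑F ⊆ Gp ∧ ∃ h : F.Nonempty, x = F.sup' h id)
    (hGm : ∀ x : L, ∃ F : Finset L, ↑F ⊆ Gm ∧ ∃ h : F.Nonempty, x = F.inf' h id)
    (hyp : ∀ a ∈ Gm, ∀ b ∈ Gp, ∀ c ∈ Gp, a ⊔ b = a ⊔ c → a ⊔ b = a ⊔ (b ⊓ c)) :
    ∀ a : L, ∀ b ∈ Gp, ∀ c ∈ Gp, a ⊔ b = a ⊔ c → a ⊔ b = a ⊔ (b ⊓ c) := by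
  intro a b hb c hc habc
  set d := a ⊔ (b ⊓ c) with hd
  refine le_antisymm ?_ (sup_le_sup_left inf_le_left a)
  obtain ⟨F, hF, hne, hdF⟩ := hGm d
  have hb_le : ∀ m ∈ F, b ≤ m := by
    intro m hm
    have hdm : d ≤ m := hdF ▸ Finset.inf'_le id hm
    have ham : a ≤ m := le_trans le_sup_left hdm
    have hbcm : b ⊓ c ≤ m := le_trans le_sup_right hdm
    have h1 : a ⊔ b ≤ m ⊔ b := sup_le_sup_right ham b
    have h2 : a ⊔ c ≤ m ⊔ c := sup_le_sup_right ham c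
    have hmb : m ⊔ b = m ⊔ c := by
      apply le_antisymm
      · exact sup_le le_sup_left (le_trans (le_trans le_sup_right (habc ▸ h2)) le_rfl)
      · exact sup_le le_sup_left (le_trans le_sup_right (habc ▸ h1))
    have := hyp m (hF hm) b hb c hc hmb
    have : m ⊔ b = m := by rw [this, sup_eq_left.mpr hbcm]
    exact le_trans le_sup_right this.le
  have hbd : b ≤ d := hdF ▸ Finset.le_inf' hne id hb_le
  exact sup_le le_sup_left hbd
end

section
/- Let L be the lattice of order-convex subsets of a partially ordered set P. Then the completely join-irreducible elements of L are exactly the singletons {p} for p ∈ P, and for distinct p, q ∈ P, {p} is join-dependent on {q} (i.e., {p} D {q} in L) if and only if there exists r ∈ P with either q < p < r or r < p < q. -/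
section
variable {P : Type*} [PartialOrder P]

/-- The order-convex closure of a subset of a poset. -/
def convClosure (S : Set P) : Set P := {p | ∃ u ∈ S, ∃ v ∈ S, u ≤ p ∧ p ≤ v}

/-- `A` is completely join-irreducible in `Co(P)`, witnessed by its unique lower
cover `A_*`. -/
def CoCJI (A : Set P) : Prop :=
  A.OrdConnected ∧ ∃ Astar : Set P, Astar.OrdConnected ∧ Astar ⊂ A ∧
    ∀ X : Set P, X.OrdConnected → X ⊂ A → X ⊆ Astar

/-- The join-dependency relation in the lattice `Co(P)` of order-convex subsets of `P`:
joins in `Co(P)` are convex closures of unions. -/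
def CoJoinDep (A B : Set P) : Prop :=
  A.OrdConnected ∧ B.OrdConnected ∧ A ≠ B ∧
    ∃ X : Set P, X.OrdConnected ∧ A ⊆ convClosure (B ∪ X) ∧
      ∀ Y : Set P, Y.OrdConnected → Y ⊂ B → ¬ A ⊆ convClosure (Y ∪ X)

end

/-- For a finite poset `P`, the completely join-irreducible elements of `Co(P)` are
exactly the singletons, and `{p} D {q}` holds for distinct `p, q` iff there is `r` with
`q < p < r` or `r < p < q`. -/
theorem coP_joinIrreducibles_and_joinDep {P : Type*} [PartialOrder P] [Fintype P] :
    (∀ A : Set P, A.OrdConnected → (CoCJI A ↔ ∃ p : P, A = {p})) ∧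
    (∀ p q : P, p ≠ q →
      (CoJoinDep ({p} : Set P) ({q} : Set P) ↔
        ∃ r : P, (q < p ∧ p < r) ∨ (r < p ∧ p < q))) := by
  have subCC : ∀ S : Set P, S ⊆ convClosure S :=
    fun S x hx => ⟨x, hx, x, hx, le_refl x, le_refl x⟩
  constructor
  · intro A hA
    constructor
    · rintro ⟨-, Astar, hAs, hsub, hmin⟩
      obtain ⟨a, haA, haS⟩ := Set.exists_of_ssubset hsub
      refine ⟨a, ?_⟩
      ext b
      simp only [Set.mem_singleton_iff]
      constructor
      · intro hb
        by_contra hba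
        have h1 : ({a} : Set P) ⊂ A := by
          constructor
          · simpa using haA
          · intro hAa
            exact hba (Set.mem_singleton_iff.mp (hAa hb))
        have := hmin {a} Set.ordConnected_singleton h1
        exact haS (this rfl)
      · rintro rfl; exact haA
    · rintro ⟨p, rfl⟩
      refine ⟨Set.ordConnected_singleton, ∅, Set.ordConnected_empty,
        Set.empty_ssubset.mpr ⟨p, rfl⟩, ?_⟩
      intro X _ hX
      rw [Set.ssubset_singleton_iff.mp hX]
  · intro p q hpq
    constructor
    · rintro ⟨-, -, -, X, hX, hsub, hmin⟩
      have hp : p ∈ convClosure ({q} ∪ X) := hsub rfl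
      have hnp : p ∉ convClosure X := by
        have h := hmin ∅ Set.ordConnected_empty (Set.empty_ssubset.mpr ⟨q, rfl⟩)
        rw [Set.empty_union] at h
        intro hc
        exact h (Set.singleton_subset_iff.mpr hc)
      have hpX : p ∉ X := fun h => hnp (subCC X h)
      obtain ⟨u, hu, v, hv, hup, hpv⟩ := hp
      rcases hu with hu | hu <;> rcases hv with hv | hv
      · exfalso
        rw [Set.mem_singleton_iff] at hu hv
        subst hu; subst hv
        exact hpq (le_antisymm hpv hup)
      · rw [Set.mem_singleton_iff] at hu; subst hu
        refine ⟨v, Or.inl ⟨lt_of_le_of_ne hup (Ne.symm hpq), lt_of_le_of_ne hpv ?_⟩⟩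
        rintro rfl; exact hpX hv
      · rw [Set.mem_singleton_iff] at hv; subst hv
        refine ⟨u, Or.inr ⟨lt_of_le_of_ne hup ?_, lt_of_le_of_ne hpv hpq⟩⟩
        rintro rfl; exact hpX hu
      · exact absurd ⟨u, hu, v, hv, hup, hpv⟩ hnp
    · rintro ⟨r, hr⟩
      have hpr : p ≠ r := by
        rcases hr with ⟨-, h⟩ | ⟨h, -⟩
        · exact ne_of_lt h
        · exact (ne_of_lt h).symm
      refine ⟨Set.ordConnected_singleton, Set.ordConnected_singleton,
        fun h => hpq (Set.singleton_eq_singleton_iff.mp h), {r},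
        Set.ordConnected_singleton, ?_, ?_⟩
      · intro x hx
        rw [Set.mem_singleton_iff] at hx; subst hx
        rcases hr with ⟨h1, h2⟩ | ⟨h1, h2⟩
        · exact ⟨q, Or.inl rfl, r, Or.inr rfl, le_of_lt h1, le_of_lt h2⟩
        · exact ⟨r, Or.inr rfl, q, Or.inl rfl, le_of_lt h1, le_of_lt h2⟩
      · intro Y _ hY
        rw [Set.ssubset_singleton_iff.mp hY, Set.empty_union]
        intro hc
        obtain ⟨u, hu, v, hv, hup, hpv⟩ := hc rfl
        rw [Set.mem_singleton_iff] at hu hv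
        subst hu; subst hv
        exact hpr (le_antisymm hpv hup)
end
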